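/- arXiv:1809.03350 — 3 statements merged into one kernel-verified Lean document; each statement's English description precedes it below -/
import Mathlib

section
/- For the weight vector w given in the context and for every pair of distinct i,j ∈ {1,2,3,4} and every K ⊆ {1,2,3,4}∖{i,j}, the initial form in_w of the square trinomial a_{ij|K}² − p_{K∪{i}} p_{K∪{j}} + p_{K∪{i,j}} p_K is not a monomial; equivalently, the minimal w-weight among the three terms a_{ij|K}², p_{K∪{i}}p_{K∪{j}} and p_{K∪{i,j}}p_K is attained by at least two of them. -/
open MvPolynomial

noncomputable section

/-- The `w`-weight `⟨w, m⟩` of an exponent vector / monomial `m`. -/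
def mWeight {σ : Type*} (w : σ → ℝ) (m : σ →₀ ℕ) : ℝ :=
  m.sum fun i e => w i * e

/-- The initial form `in_w(f)`: the sum of the terms of `f` whose `w`-weight is
minimal among all terms of `f` (min-convention, trivial valuation). -/
def initialForm {σ K : Type*} [CommRing K] (w : σ → ℝ) (f : MvPolynomial σ K) :
    MvPolynomial σ K :=
  (f.support.filter fun m => ∀ m' ∈ f.support, mWeight w m ≤ mWeight w m').sum
    fun m => monomial m (f.coeff m)

/-- A polynomial is a monomial if it equals `c · x^m` for a single exponent
vector `m` and a nonzero coefficient `c`. -/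
def IsMonomial {σ K : Type*} [CommRing K] (f : MvPolynomial σ K) : Prop :=
  ∃ (m : σ →₀ ℕ) (c : K), c ≠ 0 ∧ f = monomial m c

/-- The initial ideal `in_w(I)`: the ideal generated by the initial forms of
all nonzero elements of `I`. -/
def initialIdeal {σ K : Type*} [CommRing K] (w : σ → ℝ)
    (I : Ideal (MvPolynomial σ K)) : Ideal (MvPolynomial σ K) :=
  Ideal.span {g | ∃ h ∈ I, h ≠ 0 ∧ g = initialForm w h}


/-! ### The gaussoid ring on the ground set `{1,2,3,4}` (modelled as `Fin 4`)

Variables: `p_I` for each `I ⊆ Fin 4` (16 variables) and `a_{ij|K}` for each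
unordered pair `{i,j} ⊆ Fin 4` and each `K ⊆ Fin 4 \ {i,j}` (24 variables);
40 variables in total. -/

/-- Index type for the 40 variables: `Sum.inl I` is `p_I`; `Sum.inr ⟨(s,K),_⟩`
is `a_{ij|K}` for the unordered pair `s = {i,j}` (off-diagonal) with
`K` disjoint from `{i,j}`. -/
def GVar : Type :=
  Finset (Fin 4) ⊕
    {t : Sym2 (Fin 4) × Finset (Fin 4) // ¬ t.1.IsDiag ∧ ∀ i ∈ t.1, i ∉ t.2}

/-- The variable `p_I`. -/
def pP (I : Finset (Fin 4)) : MvPolynomial GVar ℚ := X (Sum.inl I)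

/-- The variable `a_{ij|K}` (for `i ≠ j` and `K` disjoint from `{i,j}`;
junk value `0` otherwise). -/
def aP (i j : Fin 4) (K : Finset (Fin 4)) : MvPolynomial GVar ℚ :=
  if h : ¬ (s(i, j) : Sym2 (Fin 4)).IsDiag ∧ ∀ m ∈ (s(i, j) : Sym2 (Fin 4)), m ∉ K
  then X (Sum.inr ⟨(s(i, j), K), h⟩) else 0

/-- The square trinomial `a_{ij|K}² − p_{K∪{i}} p_{K∪{j}} + p_{K∪{i,j}} p_K`. -/
def sqTri (i j : Fin 4) (K : Finset (Fin 4)) : MvPolynomial GVar ℚ :=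
  (aP i j K) ^ 2 - pP (insert i K) * pP (insert j K) +
    pP (insert i (insert j K)) * pP K

/-- The edge trinomial
`p_{L∪{k}} a_{ij|L∖{i,j}} − p_L a_{ij|(L∪{k})∖{i,j}} − a_{ki|L∖{i}} a_{kj|L∖{j}}`. -/
def edgeTri (i j k : Fin 4) (L : Finset (Fin 4)) : MvPolynomial GVar ℚ :=
  pP (insert k L) * aP i j (L \ {i, j}) - pP L * aP i j ((insert k L) \ {i, j}) -
    aP k i (L \ {i}) * aP k j (L \ {j})

/-- The generating set of `T₄`: all square trinomials and all edge trinomials. -/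
def gaussoidGens : Set (MvPolynomial GVar ℚ) :=
  {f | (∃ (i j : Fin 4) (K : Finset (Fin 4)),
          i ≠ j ∧ i ∉ K ∧ j ∉ K ∧ f = sqTri i j K) ∨
       (∃ (i j k : Fin 4) (L : Finset (Fin 4)),
          i ≠ j ∧ i ≠ k ∧ j ≠ k ∧ k ∉ L ∧ f = edgeTri i j k L)}

/-- The weight of the variable `p_I` (indices shifted: `1,2,3,4 ↦ 0,1,2,3`). -/
def wp (I : Finset (Fin 4)) : ℝ :=
  if I = ∅ then 14
  else if I = {0} then 10 else if I = {1} then 6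
  else if I = {2} then 8 else if I = {3} then 8
  else if I = {0, 1} then 6 else if I = {0, 2} then 8
  else if I = {0, 3} then 8 else if I = {1, 2} then 6
  else if I = {1, 3} then 8 else if I = {2, 3} then 8
  else if I = {0, 1, 2} then 0 else if I = {0, 1, 3} then 8
  else if I = {0, 2, 3} then 2 else if I = {1, 2, 3} then 2
  else 6

/-- The weight of the variable `a_{ij|K}` indexed by the pair `s = {i,j}`. -/
def wa (s : Sym2 (Fin 4)) (K : Finset (Fin 4)) : ℝ :=
  if s = s(0, 1) then
    (if K = ∅ then 8 else if K = {2} then 4 else if K = {3} then 10 else 2)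
  else if s = s(0, 2) then
    (if K = ∅ then 9 else if K = {1} then 3 else if K = {3} then 5 else 5)
  else if s = s(0, 3) then
    (if K = ∅ then 9 else if K = {1} then 11 else if K = {2} then 5 else 1)
  else if s = s(1, 2) then
    (if K = ∅ then 7 else if K = {0} then 5 else if K = {3} then 5 else 5)
  else if s = s(1, 3) then
    (if K = ∅ then 7 else if K = {0} then 7 else if K = {2} then 5 else 1)
  else
    (if K = ∅ then 8 else if K = {0} then 6 else if K = {1} then 4 else 4)

/-- The weight vector `w` from the paper (Theorem on valuated gaussoids). -/
def wGauss : GVar → ℝ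
  | Sum.inl I => wp I
  | Sum.inr t => wa t.val.1 t.val.2


lemma mWeight_single {σ : Type*} (w : σ → ℝ) (x : σ) (n : ℕ) :
    mWeight w (Finsupp.single x n) = w x * n := by
  unfold mWeight
  rw [Finsupp.sum_single_index]
  simp

lemma mWeight_add {σ : Type*} (w : σ → ℝ) (a b : σ →₀ ℕ) :
    mWeight w (a + b) = mWeight w a + mWeight w b := by
  classical
  unfold mWeight
  apply Finsupp.sum_add_index <;> intros <;> push_cast <;> ring

lemma coeff_initialForm {σ K : Type*} [CommRing K] (w : σ → ℝ) (f : MvPolynomial σ K)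
    (m : σ →₀ ℕ)
    (hm : m ∈ f.support.filter fun m => ∀ m' ∈ f.support, mWeight w m ≤ mWeight w m') :
    coeff m (initialForm w f) = f.coeff m := by
  classical
  unfold initialForm
  rw [MvPolynomial.coeff_sum]
  rw [Finset.sum_eq_single m]
  · rw [coeff_monomial, if_pos rfl]
  · intro b _ hbm
    rw [coeff_monomial, if_neg hbm]
  · intro h; exact absurd hm h

lemma not_isMonomial_of_two {σ K : Type*} [CommRing K] (w : σ → ℝ) (f : MvPolynomial σ K)
    (ma mb : σ →₀ ℕ) (hne : ma ≠ mb)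
    (ha : ma ∈ f.support.filter fun m => ∀ m' ∈ f.support, mWeight w m ≤ mWeight w m')
    (hb : mb ∈ f.support.filter fun m => ∀ m' ∈ f.support, mWeight w m ≤ mWeight w m') :
    ¬ IsMonomial (initialForm w f) := by
  classical
  rintro ⟨m, c, hc, hf⟩
  have hca : coeff ma (initialForm w f) ≠ 0 := by
    rw [coeff_initialForm w f ma ha]
    exact mem_support_iff.mp (Finset.mem_filter.mp ha).1
  have hcb : coeff mb (initialForm w f) ≠ 0 := by
    rw [coeff_initialForm w f mb hb]
    exact mem_support_iff.mp (Finset.mem_filter.mp hb).1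
  have h1 : m = ma := by
    by_contra h
    rw [hf, coeff_monomial] at hca
    simp [h] at hca
  have h2 : m = mb := by
    by_contra h
    rw [hf, coeff_monomial] at hcb
    simp [h] at hcb
  exact hne (h1 ▸ h2)

lemma triNotMono {σ : Type*} (w : σ → ℝ) (m1 m2 m3 : σ →₀ ℕ) (c1 c2 c3 : ℚ)
    (h12 : m1 ≠ m2) (h13 : m1 ≠ m3) (h23 : m2 ≠ m3)
    (hc1 : c1 ≠ 0) (hc2 : c2 ≠ 0) (hc3 : c3 ≠ 0)
    (hmin : (mWeight w m1 = mWeight w m2 ∧ mWeight w m1 ≤ mWeight w m3) ∨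
            (mWeight w m1 = mWeight w m3 ∧ mWeight w m1 ≤ mWeight w m2) ∨
            (mWeight w m2 = mWeight w m3 ∧ mWeight w m2 ≤ mWeight w m1)) :
    ¬ IsMonomial (initialForm w
      (monomial m1 c1 + monomial m2 c2 + monomial m3 c3 : MvPolynomial σ ℚ)) := by
  classical
  set f : MvPolynomial σ ℚ := monomial m1 c1 + monomial m2 c2 + monomial m3 c3 with hfdef
  have hco1 : f.coeff m1 = c1 := by
    simp [hfdef, coeff_monomial, Ne.symm h12, Ne.symm h13]
  have hco2 : f.coeff m2 = c2 := by
    simp [hfdef, coeff_monomial, h12, Ne.symm h23]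
  have hco3 : f.coeff m3 = c3 := by
    simp [hfdef, coeff_monomial, h13, h23]
  have hsupp : ∀ m ∈ f.support, m = m1 ∨ m = m2 ∨ m = m3 := by
    intro m hm
    rw [mem_support_iff] at hm
    by_contra hmem
    push_neg at hmem
    apply hm
    simp [hfdef, coeff_monomial, Ne.symm hmem.1, Ne.symm hmem.2.1, Ne.symm hmem.2.2]
  rcases hmin with ⟨he, hl⟩ | ⟨he, hl⟩ | ⟨he, hl⟩
  · refine not_isMonomial_of_two w f m1 m2 h12
      (Finset.mem_filter.mpr ⟨mem_support_iff.mpr (hco1 ▸ hc1), ?_⟩)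
      (Finset.mem_filter.mpr ⟨mem_support_iff.mpr (hco2 ▸ hc2), ?_⟩) <;>
    · intro m' hm'
      rcases hsupp m' hm' with rfl | rfl | rfl <;> linarith
  · refine not_isMonomial_of_two w f m1 m3 h13
      (Finset.mem_filter.mpr ⟨mem_support_iff.mpr (hco1 ▸ hc1), ?_⟩)
      (Finset.mem_filter.mpr ⟨mem_support_iff.mpr (hco3 ▸ hc3), ?_⟩) <;>
    · intro m' hm'
      rcases hsupp m' hm' with rfl | rfl | rfl <;> linarith
  · refine not_isMonomial_of_two w f m2 m3 h23
      (Finset.mem_filter.mpr ⟨mem_support_iff.mpr (hco2 ▸ hc2), ?_⟩)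
      (Finset.mem_filter.mpr ⟨mem_support_iff.mpr (hco3 ▸ hc3), ?_⟩) <;>
    · intro m' hm'
      rcases hsupp m' hm' with rfl | rfl | rfl <;> linarith

lemma keyCase (i j : Fin 4) (K : Finset (Fin 4)) (hij : i ≠ j) (hi : i ∉ K) (hj : j ∉ K)
    (hmin : (2 * wa s(i, j) K = wp (insert i K) + wp (insert j K) ∧
              2 * wa s(i, j) K ≤ wp (insert i (insert j K)) + wp K) ∨
            (2 * wa s(i, j) K = wp (insert i (insert j K)) + wp K ∧
              2 * wa s(i, j) K ≤ wp (insert i K) + wp (insert j K)) ∨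
            (wp (insert i K) + wp (insert j K) = wp (insert i (insert j K)) + wp K ∧
              wp (insert i K) + wp (insert j K) ≤ 2 * wa s(i, j) K)) :
    ¬ IsMonomial (initialForm wGauss (sqTri i j K)) := by
  have hcond : ¬ (s(i, j) : Sym2 (Fin 4)).IsDiag ∧ ∀ m ∈ (s(i, j) : Sym2 (Fin 4)), m ∉ K := by
    refine ⟨by simpa [Sym2.mk_isDiag_iff] using hij, ?_⟩
    intro m hm
    rcases Sym2.mem_iff.mp hm with rfl | rfl
    exacts [hi, hj]
  set v : GVar := Sum.inr ⟨(s(i, j), K), hcond⟩ with hv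
  set n1 : Finset (Fin 4) := insert i K with hn1
  set n2 : Finset (Fin 4) := insert j K with hn2
  set n3 : Finset (Fin 4) := insert i (insert j K) with hn3
  have hjn1 : j ∉ n1 := by
    simp only [hn1, Finset.mem_insert]
    push_neg
    exact ⟨hij.symm, hj⟩
  have hin2 : i ∉ n2 := by
    simp only [hn2, Finset.mem_insert]
    push_neg
    exact ⟨hij, hi⟩
  have hn12 : n1 ≠ n2 := fun h => hin2 (h ▸ Finset.mem_insert_self i K)
  have hn13 : n1 ≠ n3 := fun h => hjn1 (h ▸ Finset.mem_insert_of_mem (Finset.mem_insert_self j K))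
  have hn14 : n1 ≠ K := fun h => hi (h ▸ Finset.mem_insert_self i K)
  have hn23 : n2 ≠ n3 := fun h => hin2 (h ▸ Finset.mem_insert_self i (insert j K))
  have hn24 : n2 ≠ K := fun h => hj (h ▸ Finset.mem_insert_self j K)
  set m1 : GVar →₀ ℕ := Finsupp.single v 2 with hm1
  set m2 : GVar →₀ ℕ := Finsupp.single (Sum.inl n1) 1 + Finsupp.single (Sum.inl n2) 1 with hm2
  set m3 : GVar →₀ ℕ := Finsupp.single (Sum.inl n3) 1 + Finsupp.single (Sum.inl K) 1 with hm3
  have hvne : ∀ I : Finset (Fin 4), (Sum.inl I : GVar) ≠ v := fun I h => by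
    simp [hv] at h
  have hsq : sqTri i j K = monomial m1 1 + monomial m2 (-1) + monomial m3 1 := by
    rw [sqTri, aP, dif_pos hcond, pP, pP, pP, pP]
    erw [X_pow_eq_monomial]
    rw [show (X (Sum.inl n1) : MvPolynomial GVar ℚ) * (X (Sum.inl n2) : MvPolynomial GVar ℚ)
        = monomial m2 1 from by unfold X; rw [monomial_mul, one_mul]; rfl]
    rw [show (X (Sum.inl n3) : MvPolynomial GVar ℚ) * (X (Sum.inl K) : MvPolynomial GVar ℚ)
        = monomial m3 1 from by unfold X; rw [monomial_mul, one_mul]; rfl]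
    rw [sub_eq_add_neg, ← map_neg]
  classical
  have h12 : m1 ≠ m2 := by
    intro h
    have h' := Finsupp.ext_iff.mp h v
    erw [Finsupp.add_apply, Finsupp.single_eq_same, Finsupp.single_eq_of_ne (hvne n1).symm, Finsupp.single_eq_of_ne (hvne n2).symm] at h'
    simp at h'
  have h13 : m1 ≠ m3 := by
    intro h
    have h' := Finsupp.ext_iff.mp h v
    erw [Finsupp.add_apply, Finsupp.single_eq_same, Finsupp.single_eq_of_ne (hvne n3).symm, Finsupp.single_eq_of_ne (hvne K).symm] at h'
    simp at h'
  have h23 : m2 ≠ m3 := by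
    intro h
    have h' := Finsupp.ext_iff.mp h (Sum.inl n1)
    erw [Finsupp.add_apply, Finsupp.add_apply] at h'
    erw [Finsupp.single_apply, Finsupp.single_apply, Finsupp.single_apply, Finsupp.single_apply] at h'
    split_ifs at h' with e2 e3 e4 <;>
      first
        | omega
        | exact hn12 (Sum.inl.inj e2).symm
        | exact hn13 (Sum.inl.inj e3).symm
        | exact hn14 (Sum.inl.inj e4).symm
        | exact hn12 (Sum.inl.inj ‹_›).symm
        | exact hn13 (Sum.inl.inj ‹_›).symm
        | exact hn14 (Sum.inl.inj ‹_›).symm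
        | exact absurd rfl e2
  have hW1 : mWeight wGauss m1 = 2 * wa s(i, j) K := by
    rw [hm1, mWeight_single]
    show wGauss v * (2 : ℕ) = _
    rw [hv]
    show wa s(i, j) K * (2 : ℕ) = _
    push_cast
    ring
  have hW2 : mWeight wGauss m2 = wp n1 + wp n2 := by
    erw [hm2, mWeight_add, mWeight_single, mWeight_single]
    show wGauss (Sum.inl n1) * (1 : ℕ) + wGauss (Sum.inl n2) * (1 : ℕ) = _
    show wp n1 * (1 : ℕ) + wp n2 * (1 : ℕ) = _
    push_cast
    ring
  have hW3 : mWeight wGauss m3 = wp n3 + wp K := by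
    erw [hm3, mWeight_add, mWeight_single, mWeight_single]
    show wGauss (Sum.inl n3) * (1 : ℕ) + wGauss (Sum.inl K) * (1 : ℕ) = _
    show wp n3 * (1 : ℕ) + wp K * (1 : ℕ) = _
    push_cast
    ring
  rw [hsq]
  apply triNotMono wGauss m1 m2 m3 1 (-1) 1 h12 h13 h23 one_ne_zero (neg_ne_zero.mpr one_ne_zero) one_ne_zero
  rcases hmin with ⟨he, hl⟩ | ⟨he, hl⟩ | ⟨he, hl⟩
  · exact Or.inl ⟨by rw [hW1, hW2]; linarith, by rw [hW1, hW3]; linarith⟩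
  · exact Or.inr (Or.inl ⟨by rw [hW1, hW3]; linarith, by rw [hW1, hW2]; linarith⟩)
  · exact Or.inr (Or.inr ⟨by rw [hW2, hW3]; linarith, by rw [hW2, hW1]; linarith⟩)


def wpz (I : Finset (Fin 4)) : ℤ :=
  if I = ∅ then 14
  else if I = {0} then 10 else if I = {1} then 6
  else if I = {2} then 8 else if I = {3} then 8
  else if I = {0, 1} then 6 else if I = {0, 2} then 8
  else if I = {0, 3} then 8 else if I = {1, 2} then 6
  else if I = {1, 3} then 8 else if I = {2, 3} then 8
  else if I = {0, 1, 2} then 0 else if I = {0, 1, 3} then 8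
  else if I = {0, 2, 3} then 2 else if I = {1, 2, 3} then 2
  else 6

def waz (s : Sym2 (Fin 4)) (K : Finset (Fin 4)) : ℤ :=
  if s = s(0, 1) then
    (if K = ∅ then 8 else if K = {2} then 4 else if K = {3} then 10 else 2)
  else if s = s(0, 2) then
    (if K = ∅ then 9 else if K = {1} then 3 else if K = {3} then 5 else 5)
  else if s = s(0, 3) then
    (if K = ∅ then 9 else if K = {1} then 11 else if K = {2} then 5 else 1)
  else if s = s(1, 2) then
    (if K = ∅ then 7 else if K = {0} then 5 else if K = {3} then 5 else 5)
  else if s = s(1, 3) then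
    (if K = ∅ then 7 else if K = {0} then 7 else if K = {2} then 5 else 1)
  else
    (if K = ∅ then 8 else if K = {0} then 6 else if K = {1} then 4 else 4)

lemma finsetFin4Cases (K : Finset (Fin 4)) :
    K = ∅ ∨ K = {0} ∨ K = {1} ∨ K = {2} ∨ K = {3} ∨
    K = {0, 1} ∨ K = {0, 2} ∨ K = {0, 3} ∨ K = {1, 2} ∨ K = {1, 3} ∨ K = {2, 3} ∨
    K = {0, 1, 2} ∨ K = {0, 1, 3} ∨ K = {0, 2, 3} ∨ K = {1, 2, 3} ∨ K = {0, 1, 2, 3} := by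
  revert K
  decide

set_option maxHeartbeats 1000000 in
lemma wp_eq (I : Finset (Fin 4)) : wp I = ((wpz I : ℤ) : ℝ) := by
  rcases finsetFin4Cases I with rfl|rfl|rfl|rfl|rfl|rfl|rfl|rfl|rfl|rfl|rfl|rfl|rfl|rfl|rfl|rfl <;>
    simp (config := { decide := true }) [wp, wpz]
lemma sym2Cases (s : Sym2 (Fin 4)) :
    s = s(0, 0) ∨ s = s(0, 1) ∨ s = s(0, 2) ∨ s = s(0, 3) ∨ s = s(1, 1) ∨
    s = s(1, 2) ∨ s = s(1, 3) ∨ s = s(2, 2) ∨ s = s(2, 3) ∨ s = s(3, 3) := by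
  revert s
  decide

set_option maxHeartbeats 2000000 in
lemma wa_eq (s : Sym2 (Fin 4)) (K : Finset (Fin 4)) : wa s K = ((waz s K : ℤ) : ℝ) := by
  rcases sym2Cases s with rfl|rfl|rfl|rfl|rfl|rfl|rfl|rfl|rfl|rfl <;>
    rcases finsetFin4Cases K with rfl|rfl|rfl|rfl|rfl|rfl|rfl|rfl|rfl|rfl|rfl|rfl|rfl|rfl|rfl|rfl <;>
      simp (config := { decide := true }) [wa, waz]
set_option maxHeartbeats 1000000 in
lemma weightCheck : ∀ (i j : Fin 4) (K : Finset (Fin 4)), i ≠ j → i ∉ K → j ∉ K →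
    ((2 * waz s(i, j) K = wpz (insert i K) + wpz (insert j K) ∧
       2 * waz s(i, j) K ≤ wpz (insert i (insert j K)) + wpz K) ∨
     (2 * waz s(i, j) K = wpz (insert i (insert j K)) + wpz K ∧
       2 * waz s(i, j) K ≤ wpz (insert i K) + wpz (insert j K)) ∨
     (wpz (insert i K) + wpz (insert j K) = wpz (insert i (insert j K)) + wpz K ∧
       wpz (insert i K) + wpz (insert j K) ≤ 2 * waz s(i, j) K)) := by
  decide


/-- for the weight vector `w` of the paper and every pair of
distinct `i, j ∈ Fin 4` and every `K ⊆ Fin 4 ∖ {i,j}`, the initial form of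
the square trinomial `a_{ij|K}² − p_{K∪{i}} p_{K∪{j}} + p_{K∪{i,j}} p_K` is
not a monomial. -/
theorem stmt_1 :
    ∀ (i j : Fin 4) (K : Finset (Fin 4)), i ≠ j → i ∉ K → j ∉ K →
      ¬ IsMonomial (initialForm wGauss (sqTri i j K)) := by
  intro i j K hij hi hj
  apply keyCase i j K hij hi hj
  simp only [wp_eq, wa_eq]
  exact_mod_cast weightCheck i j K hij hi hj

end
end

section
/- The tropical variety of I equals the horizontal axis: {w ∈ ℝ² : in_w(h) is not a monomial for every nonzero h ∈ I} = ℝ × {0}. -/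
open MvPolynomial

noncomputable section

local notation "x" => (X 0 : MvPolynomial (Fin 2) ℂ)
local notation "y" => (X 1 : MvPolynomial (Fin 2) ℂ)

/-! ### Auxiliary lemmas -/

lemma st9_mWeight_add (w : Fin 2 → ℝ) (a b : Fin 2 →₀ ℕ) :
    mWeight w (a + b) = mWeight w a + mWeight w b := by
  unfold mWeight
  rw [Finsupp.sum_add_index']
  · intro i; simp
  · intro i b₁ b₂; push_cast; ring

lemma st9_mWeight_fin2 (w : Fin 2 → ℝ) (m : Fin 2 →₀ ℕ) :
    mWeight w m = w 0 * m 0 + w 1 * m 1 := by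
  unfold mWeight
  rw [Finsupp.sum_fintype _ _ (by intro i; simp)]
  simp [Fin.sum_univ_two]

lemma st9_coeff_initialForm (w : Fin 2 → ℝ) (f : MvPolynomial (Fin 2) ℂ) (m : Fin 2 →₀ ℕ) :
    (initialForm w f).coeff m =
      if m ∈ f.support.filter (fun m => ∀ m' ∈ f.support, mWeight w m ≤ mWeight w m')
      then f.coeff m else 0 := by
  unfold initialForm
  rw [coeff_sum]
  simp [coeff_monomial, Finset.sum_ite_eq]

/-- If `f = P + R` where `P ≠ 0` lives in weight exactly `s` and `R` in weights `> s`,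
then `in_w(f) = P`. -/
lemma st9_initialForm_eq_of (w : Fin 2 → ℝ) (P R : MvPolynomial (Fin 2) ℂ) (s : ℝ)
    (hP : P ≠ 0)
    (hPs : ∀ m ∈ P.support, mWeight w m = s)
    (hRs : ∀ m ∈ R.support, s < mWeight w m) :
    initialForm w (P + R) = P := by
  have hcoeff : ∀ m, mWeight w m ≤ s → (P + R).coeff m = P.coeff m := by
    intro m hm
    have hR : R.coeff m = 0 := by
      by_contra h
      exact absurd (hRs m (mem_support_iff.mpr h)) (not_lt.mpr hm)
    simp [coeff_add, hR]
  have hsub : ∀ m ∈ (P + R).support, s ≤ mWeight w m := by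
    intro m hm
    rcases Finset.mem_union.mp (support_add hm) with h | h
    · exact le_of_eq (hPs m h).symm
    · exact le_of_lt (hRs m h)
  have hPf : ∀ m ∈ P.support, m ∈ (P + R).support := by
    intro m hm
    rw [mem_support_iff, hcoeff m (le_of_eq (hPs m hm))]
    exact mem_support_iff.mp hm
  obtain ⟨m₀, hm₀⟩ := support_nonempty.mpr hP
  have hfilter : ((P + R).support.filter
      (fun m => ∀ m' ∈ (P + R).support, mWeight w m ≤ mWeight w m')) = P.support := by
    ext m
    simp only [Finset.mem_filter]
    constructor
    · rintro ⟨hmf, hmin⟩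
      have h1 : mWeight w m ≤ s := (hPs m₀ hm₀) ▸ hmin m₀ (hPf m₀ hm₀)
      rw [mem_support_iff] at hmf ⊢
      rwa [hcoeff m h1] at hmf
    · intro hm
      refine ⟨hPf m hm, fun m' hm' => ?_⟩
      rw [hPs m hm]; exact hsub m' hm'
  unfold initialForm
  rw [hfilter, Finset.sum_congr rfl (fun m hm => by rw [hcoeff m (le_of_eq (hPs m hm))])]
  exact support_sum_monomial_coeff P

lemma st9_initialForm_spec (w : Fin 2 → ℝ) (f : MvPolynomial (Fin 2) ℂ) (hf : f ≠ 0) :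
    ∃ s : ℝ, initialForm w f ≠ 0 ∧
      (∀ m ∈ (initialForm w f).support, mWeight w m = s) ∧
      (∀ m ∈ f.support, s ≤ mWeight w m) ∧
      (∀ m ∈ (f - initialForm w f).support, s < mWeight w m) := by
  obtain ⟨m₀, hm₀, hmin⟩ := f.support.exists_min_image (mWeight w) (support_nonempty.mpr hf)
  set F := f.support.filter (fun m => ∀ m' ∈ f.support, mWeight w m ≤ mWeight w m') with hF
  have hm₀F : m₀ ∈ F := Finset.mem_filter.mpr ⟨hm₀, hmin⟩
  have hsuppin : (initialForm w f).support = F := by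
    ext m
    rw [mem_support_iff, st9_coeff_initialForm]
    constructor
    · intro h
      by_contra hc; exact h (if_neg hc)
    · intro h
      rw [if_pos h]
      exact mem_support_iff.mp (Finset.mem_filter.mp h).1
  refine ⟨mWeight w m₀, ?_, ?_, hmin, ?_⟩
  · intro h
    have : m₀ ∈ (initialForm w f).support := hsuppin ▸ hm₀F
    rw [h] at this; simp at this
  · intro m hm
    rw [hsuppin] at hm
    obtain ⟨hm1, hm2⟩ := Finset.mem_filter.mp hm
    exact le_antisymm (hm2 m₀ hm₀) (hmin m hm1)
  · intro m hm
    rw [mem_support_iff, coeff_sub, st9_coeff_initialForm] at hm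
    by_cases hmF : m ∈ F
    · rw [if_pos hmF] at hm; simp at hm
    · rw [if_neg hmF, sub_zero] at hm
      have hmf : m ∈ f.support := mem_support_iff.mpr hm
      rw [hF, Finset.mem_filter] at hmF
      push_neg at hmF
      obtain ⟨m', hm', hlt⟩ := hmF hmf
      exact lt_of_le_of_lt (hmin m' hm') hlt

/-- Multiplicativity of the initial form. -/
lemma st9_initialForm_mul (w : Fin 2 → ℝ) (f g : MvPolynomial (Fin 2) ℂ)
    (hf : f ≠ 0) (hg : g ≠ 0) :
    initialForm w (f * g) = initialForm w f * initialForm w g := by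
  obtain ⟨sf, hf0, hfs, hfge, hfr⟩ := st9_initialForm_spec w f hf
  obtain ⟨sg, hg0, hgs, hgge, hgr⟩ := st9_initialForm_spec w g hg
  have key : f * g = initialForm w f * initialForm w g +
      (initialForm w f * (g - initialForm w g) + (f - initialForm w f) * g) := by ring
  rw [key]
  apply st9_initialForm_eq_of w _ _ (sf + sg) (mul_ne_zero hf0 hg0)
  · intro m hm
    obtain ⟨a, ha, b, hb, rfl⟩ := Finset.mem_add.mp (support_mul _ _ hm)
    rw [st9_mWeight_add, hfs a ha, hgs b hb]
  · intro m hm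
    rcases Finset.mem_union.mp (support_add hm) with h | h
    · obtain ⟨a, ha, b, hb, rfl⟩ := Finset.mem_add.mp (support_mul _ _ h)
      rw [st9_mWeight_add, hfs a ha]
      exact add_lt_add_right (hgr b hb) _
    · obtain ⟨a, ha, b, hb, rfl⟩ := Finset.mem_add.mp (support_mul _ _ h)
      rw [st9_mWeight_add]
      exact add_lt_add_of_lt_of_le (hfr a ha) (hgge b hb)

lemma st9_y1_ne_zero : (y + 1 : MvPolynomial (Fin 2) ℂ) ≠ 0 := by
  intro h
  have := congrArg (coeff 0) h
  simp [coeff_zero_X] at this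

lemma st9_y1_support (m : Fin 2 →₀ ℕ) :
    m ∈ (y + 1 : MvPolynomial (Fin 2) ℂ).support → m 0 = 0 := by
  intro hm
  have := support_add hm
  rw [support_X, show (1 : MvPolynomial (Fin 2) ℂ) = monomial 0 1 by simp,
    support_monomial] at this
  simp only [Finset.mem_union, Finset.mem_singleton,
    if_neg (one_ne_zero (α := ℂ))] at this
  rcases this with rfl | rfl <;> simp [Finsupp.single_apply]

lemma st9_eval_monomial_ne (m : Fin 2 →₀ ℕ) (c : ℂ) (hc : c ≠ 0) :
    eval ![(1:ℂ), -1] (monomial m c) ≠ 0 := by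
  rw [eval_monomial]
  apply mul_ne_zero hc
  rw [Finsupp.prod]
  apply Finset.prod_ne_zero_iff.mpr
  intro i _
  apply pow_ne_zero
  fin_cases i <;> norm_num

/-- the tropical variety of `I = ⟨(x+1)(y+1), (x-1)(y+1)⟩`, i.e.
the set of weight vectors `w` such that `in_w(h)` is not a monomial for every
nonzero `h ∈ I`, equals the horizontal axis `ℝ × {0}`. -/
theorem stmt_9 :
    let I : Ideal (MvPolynomial (Fin 2) ℂ) :=
      Ideal.span {(x + 1) * (y + 1), (x - 1) * (y + 1)}
    {w : Fin 2 → ℝ | ∀ h ∈ I, h ≠ 0 → ¬ IsMonomial (initialForm w h)} =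
      {w : Fin 2 → ℝ | w 1 = 0} := by
  intro I
  have hy1mem : (y + 1 : MvPolynomial (Fin 2) ℂ) ∈ I := by
    rw [Ideal.mem_span_pair]
    refine ⟨C (2⁻¹ : ℂ), -C (2⁻¹ : ℂ), ?_⟩
    have h2 : (C (2⁻¹ : ℂ) : MvPolynomial (Fin 2) ℂ) * 2 = 1 := by
      rw [show (2 : MvPolynomial (Fin 2) ℂ) = C 2 from
        (MvPolynomial.C_eq_coe_nat 2).symm.trans (by norm_num), ← C_mul]
      norm_num
    linear_combination (y + 1) * h2
  have hIle : I ≤ Ideal.span {(y + 1 : MvPolynomial (Fin 2) ℂ)} := by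
    rw [Ideal.span_le]
    rintro p (rfl | rfl) <;>
      exact Ideal.mem_span_singleton.mpr ⟨_, mul_comm _ _⟩
  ext w
  simp only [Set.mem_setOf_eq]
  constructor
  · -- tropical variety ⊆ axis
    intro hw
    by_contra hw1
    apply hw (y + 1) hy1mem st9_y1_ne_zero
    rcases lt_or_gt_of_ne hw1 with hneg | hpos
    · -- w 1 < 0 : the initial form is the monomial `y`
      have hXs : ∀ m ∈ (X 1 : MvPolynomial (Fin 2) ℂ).support, mWeight w m = w 1 := by
        intro m hm
        rw [support_X, Finset.mem_singleton] at hm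
        subst hm
        rw [st9_mWeight_fin2]
        simp [Finsupp.single_apply]
      have h1s : ∀ m ∈ (1 : MvPolynomial (Fin 2) ℂ).support, w 1 < mWeight w m := by
        intro m hm
        rw [show (1 : MvPolynomial (Fin 2) ℂ) = monomial 0 1 by simp,
          support_monomial, if_neg (one_ne_zero (α := ℂ)), Finset.mem_singleton] at hm
        subst hm
        rw [st9_mWeight_fin2]; simpa using hneg
      have := st9_initialForm_eq_of w (X 1) 1 (w 1) (X_ne_zero 1) hXs h1s
      rw [this]
      exact ⟨Finsupp.single 1 1, 1, one_ne_zero, rfl⟩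
    · -- w 1 > 0 : the initial form is the monomial `1`
      have h1s : ∀ m ∈ (1 : MvPolynomial (Fin 2) ℂ).support, mWeight w m = 0 := by
        intro m hm
        rw [show (1 : MvPolynomial (Fin 2) ℂ) = monomial 0 1 by simp,
          support_monomial, if_neg (one_ne_zero (α := ℂ)), Finset.mem_singleton] at hm
        subst hm
        rw [st9_mWeight_fin2]; simp
      have hXs : ∀ m ∈ (X 1 : MvPolynomial (Fin 2) ℂ).support, (0:ℝ) < mWeight w m := by
        intro m hm
        rw [support_X, Finset.mem_singleton] at hm
        subst hm
        rw [st9_mWeight_fin2]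
        simpa [Finsupp.single_apply] using hpos
      have := st9_initialForm_eq_of w 1 (X 1) 0 one_ne_zero h1s hXs
      rw [add_comm] at this
      rw [this]
      exact ⟨0, 1, one_ne_zero, by simp⟩
  · -- axis ⊆ tropical variety
    intro hw1 h hI hne hmono
    obtain ⟨g, hg⟩ := Ideal.mem_span_singleton.mp (hIle hI)
    have hgne : g ≠ 0 := by
      rintro rfl
      simp [hg] at hne
    have hin1 : initialForm w (y + 1 : MvPolynomial (Fin 2) ℂ) = y + 1 := by
      have := st9_initialForm_eq_of w (y + 1) 0 0 st9_y1_ne_zero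
        (fun m hm => by rw [st9_mWeight_fin2, st9_y1_support m hm, hw1]; simp)
        (fun m hm => by simp at hm)
      rwa [add_zero] at this
    have hinh : initialForm w h = (y + 1) * initialForm w g := by
      rw [hg, st9_initialForm_mul w _ g st9_y1_ne_zero hgne, hin1]
    obtain ⟨m, c, hc, heq⟩ := hmono
    rw [hinh] at heq
    have hev := congrArg (eval ![(1:ℂ), -1]) heq
    rw [eval_mul] at hev
    simp only [eval_add, eval_X, map_one] at hev
    norm_num at hev
    exact st9_eval_monomial_ne m c hc hev.symm

end
end

section
/- Let K be a field, let f ∈ K[x₁,…,x_n] be a nonzero polynomial, let F be a finite set of nonzero polynomials in K[x₁,…,x_n], and let w ∈ ℝⁿ. Then the Gröbner polyhedron C_w(f), defined as the closure of {v ∈ ℝⁿ : in_v(f) = in_w(f)}, is a convex polyhedron, i.e., a finite intersection of closed half-spaces; explicitly, C_w(f) = {v ∈ ℝⁿ : ⟨v,α⟩ = ⟨v,α'⟩ for all α, α' ∈ A and ⟨v,α⟩ ≤ ⟨v,β⟩ for all α ∈ A and all β in the support of f}, where A is the set of exponents of f of minimal w-weight. Consequently C_w(F) := closure of {v : in_v(g)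 = in_w(g) for all g ∈ F}, which equals ⋂_{g∈F} C_w(g), is also a convex polyhedron. -/
open MvPolynomial

noncomputable section

/-- The Gröbner polyhedron `C_w(f)`: the closure of the set of weight vectors
`v` with `in_v(f) = in_w(f)`. -/
def GroebnerRegion {n : ℕ} {K : Type*} [CommRing K] (w : Fin n → ℝ)
    (f : MvPolynomial (Fin n) K) : Set (Fin n → ℝ) :=
  closure {v : Fin n → ℝ | initialForm v f = initialForm w f}

/-- A convex polyhedron: a finite intersection of closed half-spaces. -/
def IsPolyhedron {n : ℕ} (S : Set (Fin n → ℝ)) : Prop :=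
  ∃ (m : ℕ) (c : Fin m → Fin n → ℝ) (b : Fin m → ℝ),
    S = ⋂ i : Fin m, {v : Fin n → ℝ | ∑ j, c i j * v j ≤ b i}

namespace Stmt12Aux

variable {K : Type*} [Field K] {n : ℕ}

/-- The set of exponents of `f` of minimal `v`-weight. -/
def Aset (v : Fin n → ℝ) (f : MvPolynomial (Fin n) K) : Finset (Fin n →₀ ℕ) :=
  f.support.filter fun m => ∀ m' ∈ f.support, mWeight v m ≤ mWeight v m'

lemma mem_Aset {v : Fin n → ℝ} {f : MvPolynomial (Fin n) K} {m : Fin n →₀ ℕ} :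
    m ∈ Aset v f ↔ m ∈ f.support ∧ ∀ m' ∈ f.support, mWeight v m ≤ mWeight v m' :=
  Finset.mem_filter

lemma mWeight_eq_sum (v : Fin n → ℝ) (m : Fin n →₀ ℕ) :
    mWeight v m = ∑ j : Fin n, (m j : ℝ) * v j := by
  rw [mWeight, Finsupp.sum_fintype]
  · exact Finset.sum_congr rfl fun j _ => mul_comm _ _
  · intro i; simp

lemma continuous_mWeight (m : Fin n →₀ ℕ) :
    Continuous fun v : Fin n → ℝ => mWeight v m := by
  simp only [mWeight_eq_sum]
  exact continuous_finset_sum _ fun j _ => continuous_const.mul (continuous_apply j)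

lemma mWeight_add_smul (v w : Fin n → ℝ) (t : ℝ) (m : Fin n →₀ ℕ) :
    mWeight (v + t • w) m = mWeight v m + t * mWeight w m := by
  simp only [mWeight_eq_sum, Finset.mul_sum, ← Finset.sum_add_distrib]
  refine Finset.sum_congr rfl fun j _ => ?_
  simp only [Pi.add_apply, Pi.smul_apply, smul_eq_mul]
  ring

lemma sum_sub_mul (v : Fin n → ℝ) (α β : Fin n →₀ ℕ) :
    ∑ j, ((α j : ℝ) - β j) * v j = mWeight v α - mWeight v β := by
  simp [mWeight_eq_sum, sub_mul, Finset.sum_sub_distrib]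

lemma initialForm_def (v : Fin n → ℝ) (f : MvPolynomial (Fin n) K) :
    initialForm v f = (Aset v f).sum fun m => monomial m (f.coeff m) := rfl

lemma coeff_initialForm (v : Fin n → ℝ) (f : MvPolynomial (Fin n) K) (m : Fin n →₀ ℕ) :
    coeff m (initialForm v f) = if m ∈ Aset v f then coeff m f else 0 := by
  rw [initialForm_def, coeff_sum]
  simp [coeff_monomial, Finset.sum_ite_eq']

lemma support_initialForm (v : Fin n → ℝ) (f : MvPolynomial (Fin n) K) :
    (initialForm v f).support = Aset v f := by
  ext m
  simp only [mem_support_iff, coeff_initialForm]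
  by_cases h : m ∈ Aset v f
  · simp [h, mem_support_iff.mp (Finset.filter_subset _ _ h)]
  · simp [h]

lemma initialForm_eq_iff (v w : Fin n → ℝ) (f : MvPolynomial (Fin n) K) :
    initialForm v f = initialForm w f ↔ Aset v f = Aset w f := by
  constructor
  · intro h
    rw [← support_initialForm v f, h, support_initialForm]
  · intro h
    rw [initialForm_def, initialForm_def, h]

lemma Aset_nonempty (w : Fin n → ℝ) {f : MvPolynomial (Fin n) K} (hf : f ≠ 0) :
    (Aset w f).Nonempty := by
  obtain ⟨m, hm, hmin⟩ := Finset.exists_min_image f.support (mWeight w)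
    (Finset.nonempty_iff_ne_empty.mpr (fun h => hf (support_eq_empty.mp h)))
  exact ⟨m, mem_Aset.mpr ⟨hm, hmin⟩⟩

lemma Aset_shift {f : MvPolynomial (Fin n) K} (hf : f ≠ 0) {v w : Fin n → ℝ}
    (hsub : Aset w f ⊆ Aset v f) {t : ℝ} (ht : 0 < t) :
    Aset (v + t • w) f = Aset w f := by
  obtain ⟨α₀, hα₀⟩ := Aset_nonempty w hf
  obtain ⟨hα₀s, hα₀w⟩ := mem_Aset.mp hα₀
  have hα₀v := (mem_Aset.mp (hsub hα₀)).2
  ext β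
  simp only [mem_Aset, mWeight_add_smul]
  constructor
  · rintro ⟨hβs, hβmin⟩
    refine ⟨hβs, fun β' hβ' => ?_⟩
    by_contra hlt
    push_neg at hlt
    have h0 := hα₀w β' hβ'
    have h1 := hα₀v β hβs
    have h2 := hβmin α₀ hα₀s
    nlinarith
  · rintro ⟨hβs, hβw⟩
    refine ⟨hβs, fun β' hβ' => ?_⟩
    have h1 := (mem_Aset.mp (hsub (mem_Aset.mpr ⟨hβs, hβw⟩))).2 β' hβ'
    have h2 := hβw β' hβ'
    nlinarith

lemma Aset_subset_iff (w v : Fin n → ℝ) (f : MvPolynomial (Fin n) K) :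
    Aset w f ⊆ Aset v f ↔ ∀ α ∈ Aset w f, ∀ β ∈ f.support, mWeight v α ≤ mWeight v β := by
  constructor
  · intro h α hα β hβ
    exact (mem_Aset.mp (h hα)).2 β hβ
  · intro h α hα
    exact mem_Aset.mpr ⟨Finset.filter_subset _ _ hα, h α hα⟩

lemma mem_closure_shift {S : Set (Fin n → ℝ)} (v w : Fin n → ℝ)
    (h : ∀ t : ℝ, 0 < t → v + t • w ∈ S) : v ∈ closure S := by
  have hcont : Continuous fun t : ℝ => v + t • w :=
    continuous_const.add (continuous_id.smul continuous_const)
  have htend : Filter.Tendsto (fun t : ℝ => v + t • w) (nhdsWithin 0 (Set.Ioi 0)) (nhds v) := by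
    simpa using (hcont.tendsto 0).mono_left nhdsWithin_le_nhds
  exact mem_closure_of_tendsto htend (eventually_mem_nhdsWithin.mono fun t ht => h t ht)

lemma isClosed_subset_set (w : Fin n → ℝ) (f : MvPolynomial (Fin n) K) :
    IsClosed {v : Fin n → ℝ | Aset w f ⊆ Aset v f} := by
  have : {v : Fin n → ℝ | Aset w f ⊆ Aset v f}
      = ⋂ α ∈ Aset w f, ⋂ β ∈ f.support, {v : Fin n → ℝ | mWeight v α ≤ mWeight v β} := by
    ext v
    simp only [Set.mem_setOf_eq, Set.mem_iInter, Aset_subset_iff]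
  rw [this]
  exact isClosed_biInter fun α _ => isClosed_biInter fun β _ =>
    isClosed_le (continuous_mWeight α) (continuous_mWeight β)

lemma groebnerRegion_eq (w : Fin n → ℝ) {f : MvPolynomial (Fin n) K} (hf : f ≠ 0) :
    GroebnerRegion w f = {v : Fin n → ℝ | Aset w f ⊆ Aset v f} := by
  apply Set.Subset.antisymm
  · apply closure_minimal
    · intro v hv
      have h := (initialForm_eq_iff v w f).mp hv
      intro x hx
      rw [h]
      exact hx
    · exact isClosed_subset_set w f
  · intro v hv
    apply mem_closure_shift
    intro t ht
    show initialForm (v + t • w) f = initialForm w f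
    rw [initialForm_eq_iff]
    exact Aset_shift hf hv ht

lemma isPolyhedron_biInter {ι : Type*} (T : Finset ι) (c : ι → Fin n → ℝ) (b : ι → ℝ) :
    IsPolyhedron (⋂ i ∈ T, {v : Fin n → ℝ | ∑ j, c i j * v j ≤ b i}) := by
  refine ⟨T.card, fun k => c (T.equivFin.symm k), fun k => b (T.equivFin.symm k), ?_⟩
  ext v
  simp only [Set.mem_iInter, Set.mem_setOf_eq]
  constructor
  · intro h k
    exact h _ (T.equivFin.symm k).2
  · intro h i hi
    have := h (T.equivFin ⟨i, hi⟩)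
    simpa using this

lemma polyhedron_subset_set (w : Fin n → ℝ) (f : MvPolynomial (Fin n) K) :
    {v : Fin n → ℝ | Aset w f ⊆ Aset v f} =
      ⋂ p ∈ (Aset w f) ×ˢ f.support,
        {v : Fin n → ℝ | ∑ j, ((p.1 j : ℝ) - p.2 j) * v j ≤ 0} := by
  ext v
  simp only [Set.mem_setOf_eq, Set.mem_iInter, Aset_subset_iff, Finset.mem_product]
  constructor
  · rintro h ⟨α, β⟩ ⟨hα, hβ⟩
    rw [sum_sub_mul]
    have := h α hα β hβ
    linarith
  · intro h α hα β hβ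
    have := h (α, β) ⟨hα, hβ⟩
    rw [sum_sub_mul] at this
    linarith

lemma isPolyhedron_inter_subsets (w : Fin n → ℝ) (F : Finset (MvPolynomial (Fin n) K)) :
    IsPolyhedron (⋂ g ∈ F, {v : Fin n → ℝ | Aset w g ⊆ Aset v g}) := by
  have key : (⋂ g ∈ F, {v : Fin n → ℝ | Aset w g ⊆ Aset v g})
      = ⋂ x ∈ F.sigma (fun g => (Aset w g) ×ˢ g.support),
          {v : Fin n → ℝ | ∑ j, ((x.2.1 j : ℝ) - x.2.2 j) * v j ≤ 0} := by
    ext v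
    simp only [Set.mem_iInter]
    constructor
    · rintro hv ⟨g, p⟩ hx
      rw [Finset.mem_sigma] at hx
      obtain ⟨hg, hp⟩ := hx
      rw [Finset.mem_product] at hp
      have := (Aset_subset_iff w v g).mp (hv g hg) p.1 hp.1 p.2 hp.2
      rw [Set.mem_setOf_eq, sum_sub_mul]
      linarith
    · intro hv g hg
      rw [Set.mem_setOf_eq, Aset_subset_iff]
      intro α hα β hβ
      have := hv ⟨g, (α, β)⟩ (Finset.mem_sigma.mpr ⟨hg, Finset.mem_product.mpr ⟨hα, hβ⟩⟩)
      rw [Set.mem_setOf_eq, sum_sub_mul] at this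
      linarith
  rw [key]
  have h := isPolyhedron_biInter (F.sigma fun g => (Aset w g) ×ˢ g.support)
    (fun x j => (x.2.1 j : ℝ) - x.2.2 j) (fun _ => 0)
  simpa using h

end Stmt12Aux

open Stmt12Aux in
/-- for a nonzero `f ∈ K[x₁,…,xₙ]`, the Gröbner polyhedron
`C_w(f)` equals the explicitly described set (where `A` is the set of
exponents of `f` of minimal `w`-weight), and is a convex polyhedron; moreover
`C_w(F)` for a finite set `F` of nonzero polynomials equals `⋂_{g ∈ F} C_w(g)`
and is also a convex polyhedron.  (Here `mWeight v α = ⟨v, α⟩`.) -/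
theorem stmt_12 {K : Type*} [Field K] {n : ℕ}
    (f : MvPolynomial (Fin n) K) (hf : f ≠ 0)
    (F : Finset (MvPolynomial (Fin n) K)) (hF : ∀ g ∈ F, g ≠ 0)
    (w : Fin n → ℝ) :
    let A := f.support.filter fun α => ∀ β ∈ f.support, mWeight w α ≤ mWeight w β
    (GroebnerRegion w f =
      {v : Fin n → ℝ |
        (∀ α ∈ A, ∀ α' ∈ A, mWeight v α = mWeight v α') ∧
        (∀ α ∈ A, ∀ β ∈ f.support, mWeight v α ≤ mWeight v β)}) ∧
    IsPolyhedron (GroebnerRegion w f) ∧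
    (closure {v : Fin n → ℝ | ∀ g ∈ F, initialForm v g = initialForm w g} =
      ⋂ g ∈ F, GroebnerRegion w g) ∧
    IsPolyhedron
      (closure {v : Fin n → ℝ | ∀ g ∈ F, initialForm v g = initialForm w g}) := by
  intro A
  have hA : A = Aset w f := rfl
  have h3 : closure {v : Fin n → ℝ | ∀ g ∈ F, initialForm v g = initialForm w g} =
      ⋂ g ∈ F, GroebnerRegion w g := by
    apply Set.Subset.antisymm
    · apply closure_minimal
      · intro v hv
        exact Set.mem_iInter₂.mpr fun g hg => subset_closure (hv g hg)
      · exact isClosed_biInter fun g _ => isClosed_closure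
    · intro v hv
      apply mem_closure_shift
      intro t ht g hg
      have hv' : v ∈ GroebnerRegion w g := Set.mem_iInter₂.mp hv g hg
      rw [groebnerRegion_eq w (hF g hg)] at hv'
      exact (initialForm_eq_iff _ _ _).mpr (Aset_shift (hF g hg) hv' ht)
  refine ⟨?_, ?_, h3, ?_⟩
  · rw [groebnerRegion_eq w hf]
    ext v
    rw [Set.mem_setOf_eq, Set.mem_setOf_eq, Aset_subset_iff, hA]
    constructor
    · intro h
      refine ⟨fun α hα α' hα' => le_antisymm
        (h α hα α' (mem_Aset.mp hα').1)
        (h α' hα' α (mem_Aset.mp hα).1), h⟩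
    · exact fun h => h.2
  · rw [groebnerRegion_eq w hf, polyhedron_subset_set]
    have h := isPolyhedron_biInter ((Aset w f) ×ˢ f.support)
      (fun p j => (p.1 j : ℝ) - p.2 j) (fun _ => 0)
    simpa using h
  · rw [h3]
    have : (⋂ g ∈ F, GroebnerRegion w g)
        = ⋂ g ∈ F, {v : Fin n → ℝ | Aset w g ⊆ Aset v g} := by
      apply Set.iInter₂_congr
      intro g hg
      exact groebnerRegion_eq w (hF g hg)
    rw [this]
    exact isPolyhedron_inter_subsets w F

end
end
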